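/- arXiv:0808.2279 — 2 statements merged into one kernel-verified Lean document; each statement's English description precedes it below -/
import Mathlib

section
/- The map φ: ℝ² → ℝ³ defined by φ(x,y) = (R·cos(x/R), R·sin(x/R), y) satisfies: (a) φ is conformal with respect to the metric g = e^{y/R}(dx² + dy²), with φ*⟨,⟩₀ = λ²g where λ² = e^{−y/R}; (b) each component φ^σ satisfies ∂²/∂z̄∂z (λ⁻²·∂φ_z^σ/∂z̄) = 0 where φ_z = (φ_x − i·φ_y)/2; and (c) φ_z is not holomorphic, i.e. ∂φ_z/∂z̄ ≠ 0. -/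
open Complex

noncomputable def pdx {E : Type*} [NormedAddCommGroup E] [NormedSpace ℝ E]
    (f : ℝ × ℝ → E) (p : ℝ × ℝ) : E := deriv (fun t => f (t, p.2)) p.1

noncomputable def pdy {E : Type*} [NormedAddCommGroup E] [NormedSpace ℝ E]
    (f : ℝ × ℝ → E) (p : ℝ × ℝ) : E := deriv (fun t => f (p.1, t)) p.2

/-- ∂/∂z = (∂/∂x − i∂/∂y)/2. -/
noncomputable def wz (f : ℝ × ℝ → ℂ) (p : ℝ × ℝ) : ℂ :=
  (pdx f p - Complex.I * pdy f p) / 2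

/-- ∂/∂z̄ = (∂/∂x + i∂/∂y)/2. -/
noncomputable def wzbar (f : ℝ × ℝ → ℂ) (p : ℝ × ℝ) : ℂ :=
  (pdx f p + Complex.I * pdy f p) / 2

/-!
The components `R cos(x/R)` and `R sin(x/R)` lie in the family
`e^{sy/R} (c cos(x/R) + d sin(x/R))`, which is stable under `∂/∂x` and `∂/∂y`; on it
`∂²/∂z̄∂z = Δ/4` acts as multiplication by `(s² - 1)/(4R²)`. Multiplying by
`λ⁻² = e^{y/R}` moves the `s = 0` member `∂φ_z/∂z̄` to `s = 1`, where this factor vanishes,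
while for `s = 0` and `R ≠ 0` it does not. The third component `y` has constant `φ_z`.
-/

section PartialDerivatives

variable {E : Type*} [NormedAddCommGroup E] [NormedSpace ℝ E]

lemma pdy_comp_snd (g : ℝ → E) (p : ℝ × ℝ) : pdy (fun q => g q.2) p = deriv g p.2 := rfl

lemma pdx_comp_snd (g : ℝ → E) (p : ℝ × ℝ) : pdx (fun q => g q.2) p = 0 :=
  deriv_const p.1 (g p.2)

lemma pdy_comp_fst (g : ℝ → E) (p : ℝ × ℝ) : pdy (fun q => g q.1) p = 0 :=
  deriv_const p.2 (g p.1)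

end PartialDerivatives

lemma deriv_mul_cos_div {R : ℝ} (hR : R ≠ 0) (x : ℝ) :
    deriv (fun t => R * Real.cos (t / R)) x = -Real.sin (x / R) := by
  have h := (((Real.hasDerivAt_cos _).comp x ((hasDerivAt_id x).div_const R))).const_mul R
  refine h.deriv.trans ?_
  field_simp
  simp

lemma deriv_mul_sin_div {R : ℝ} (hR : R ≠ 0) (x : ℝ) :
    deriv (fun t => R * Real.sin (t / R)) x = Real.cos (x / R) := by
  have h := (((Real.hasDerivAt_sin _).comp x ((hasDerivAt_id x).div_const R))).const_mul R
  refine h.deriv.trans ?_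
  field_simp
  simp

lemma wz_const (c : ℂ) : wz (fun _ => c) = fun _ => 0 := by
  funext p
  simp [wz, pdx, pdy]

lemma wzbar_const (c : ℂ) : wzbar (fun _ => c) = 0 := by
  funext p
  simp [wzbar, pdx, pdy]

lemma wz_ofReal_snd : wz (fun q => ((q.2 : ℝ) : ℂ)) = fun _ => -I / 2 := by
  funext p
  have hy : deriv (fun t : ℝ => (t : ℂ)) p.2 = 1 := ((hasDerivAt_id p.2).ofReal_comp).deriv
  rw [wz, pdx_comp_snd, pdy_comp_snd, hy]
  ring

lemma wzbar_wz_ofReal_snd : wzbar (wz (fun q => ((q.2 : ℝ) : ℂ))) = 0 := by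
  rw [wz_ofReal_snd, wzbar_const]

section ExpTrig

noncomputable def expTrig (R s : ℝ) (c d : ℂ) (q : ℝ × ℝ) : ℂ :=
  (Real.exp (s * q.2 / R) : ℂ) * (c * (Real.cos (q.1 / R) : ℂ) + d * (Real.sin (q.1 / R) : ℂ))

variable (R s : ℝ) (c d : ℂ)

lemma expTrig_zero_zero : expTrig R s 0 0 = 0 := by
  funext q
  simp [expTrig]

lemma ofReal_exp_mul_expTrig_zero (q : ℝ × ℝ) :
    (Real.exp (q.2 / R) : ℂ) * expTrig R 0 c d q = expTrig R 1 c d q := by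
  simp [expTrig]

lemma pdx_expTrig (p : ℝ × ℝ) : pdx (expTrig R s c d) p = expTrig R s (d / R) (-c / R) p := by
  have hcos :
      HasDerivAt (fun t : ℝ => (Real.cos (t / R) : ℂ)) (-Real.sin (p.1 / R) / R : ℝ) p.1 :=
    ((Real.hasDerivAt_cos _).comp _ ((hasDerivAt_id _).div_const R)).ofReal_comp.congr_deriv
      (by simp [div_eq_mul_inv])
  have hsin : HasDerivAt (fun t : ℝ => (Real.sin (t / R) : ℂ)) (Real.cos (p.1 / R) / R : ℝ) p.1 :=
    ((Real.hasDerivAt_sin _).comp _ ((hasDerivAt_id _).div_const R)).ofReal_comp.congr_deriv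
      (by simp [div_eq_mul_inv])
  refine (((hcos.const_mul c).add (hsin.const_mul d)).const_mul
    (Real.exp (s * p.2 / R) : ℂ)).deriv.trans ?_
  simp only [expTrig]
  push_cast
  ring

lemma pdy_expTrig (p : ℝ × ℝ) :
    pdy (expTrig R s c d) p = expTrig R s (s * c / R) (s * d / R) p := by
  have hexp : HasDerivAt (fun t : ℝ => (Real.exp (s * t / R) : ℂ))
      (Real.exp (s * p.2 / R) * (s / R) : ℝ) p.2 :=
    ((Real.hasDerivAt_exp _).comp _
      (((hasDerivAt_id _).const_mul s).div_const R)).ofReal_comp.congr_deriv (by simp)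
  refine (hexp.mul_const
    (c * (Real.cos (p.1 / R) : ℂ) + d * (Real.sin (p.1 / R) : ℂ))).deriv.trans ?_
  simp only [expTrig]
  push_cast
  ring

lemma wz_expTrig :
    wz (expTrig R s c d) =
      expTrig R s ((d - I * (s * c)) / (2 * R)) ((-c - I * (s * d)) / (2 * R)) := by
  funext p
  simp only [wz, pdx_expTrig, pdy_expTrig, expTrig]
  ring

lemma wzbar_expTrig :
    wzbar (expTrig R s c d) =
      expTrig R s ((d + I * (s * c)) / (2 * R)) ((-c + I * (s * d)) / (2 * R)) := by
  funext p
  simp only [wzbar, pdx_expTrig, pdy_expTrig, expTrig]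
  ring

lemma wzbar_wz_expTrig :
    wzbar (wz (expTrig R s c d)) =
      expTrig R s ((s ^ 2 - 1) / (4 * R ^ 2) * c) ((s ^ 2 - 1) / (4 * R ^ 2) * d) := by
  rw [wz_expTrig, wzbar_expTrig]
  congr 1 <;> ring_nf <;> simp only [I_sq] <;> ring

lemma wzbar_wz_ofReal_exp_mul_wzbar_wz_expTrig_zero :
    wzbar (wz (fun q => (Real.exp (q.2 / R) : ℂ) * wzbar (wz (expTrig R 0 c d)) q)) = 0 := by
  simp only [wzbar_wz_expTrig R 0, ofReal_exp_mul_expTrig_zero, wzbar_wz_expTrig R 1]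
  norm_num [expTrig_zero_zero]

end ExpTrig

section Cylinder

noncomputable def cylinder (R : ℝ) (p : ℝ × ℝ) : Fin 3 → ℝ :=
  ![R * Real.cos (p.1 / R), R * Real.sin (p.1 / R), p.2]

variable {R : ℝ}

lemma pdx_cylinder (hR : R ≠ 0) (p : ℝ × ℝ) (σ : Fin 3) :
    pdx (fun q => cylinder R q σ) p = ![-Real.sin (p.1 / R), Real.cos (p.1 / R), 0] σ := by
  fin_cases σ
  exacts [deriv_mul_cos_div hR p.1, deriv_mul_sin_div hR p.1, pdx_comp_snd id p]

lemma pdy_cylinder (p : ℝ × ℝ) (σ : Fin 3) : pdy (fun q => cylinder R q σ) p = ![0, 0, 1] σ := by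
  fin_cases σ
  exacts [pdy_comp_fst (fun t => R * Real.cos (t / R)) p,
    pdy_comp_fst (fun t => R * Real.sin (t / R)) p, deriv_id p.2]

lemma ofReal_cylinder_zero : (fun q => (cylinder R q 0 : ℂ)) = expTrig R 0 R 0 := by
  funext q
  simp [cylinder, expTrig]

lemma ofReal_cylinder_one : (fun q => (cylinder R q 1 : ℂ)) = expTrig R 0 0 R := by
  funext q
  simp [cylinder, expTrig]

lemma ofReal_cylinder_two : (fun q => (cylinder R q 2 : ℂ)) = fun q => (q.2 : ℂ) := by
  funext q
  simp [cylinder]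

end Cylinder

/-- φ(x,y) = (R cos(x/R), R sin(x/R), y) is (a) conformal with respect to
g = e^{y/R}(dx²+dy²) with φ*⟨,⟩₀ = λ²g, λ² = e^{−y/R}; (b) satisfies the Weierstrass-type
biharmonicity condition ∂²/∂z̄∂z (λ⁻²·∂φ_z^σ/∂z̄) = 0; and (c) φ_z is not holomorphic. -/
theorem stmt_7 (R : ℝ) (hR : 0 < R) (φ : ℝ × ℝ → Fin 3 → ℝ)
    (hφ : ∀ p : ℝ × ℝ,
      φ p = ![R * Real.cos (p.1 / R), R * Real.sin (p.1 / R), p.2]) :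
    (∀ p : ℝ × ℝ,
        (∑ σ, (pdx (fun q => φ q σ) p) ^ 2) = Real.exp (-(p.2 / R)) * Real.exp (p.2 / R)
        ∧ (∑ σ, (pdy (fun q => φ q σ) p) ^ 2) = Real.exp (-(p.2 / R)) * Real.exp (p.2 / R)
        ∧ (∑ σ, pdx (fun q => φ q σ) p * pdy (fun q => φ q σ) p) = 0)
    ∧ (∀ (p : ℝ × ℝ) (σ : Fin 3),
        wzbar (wz (fun q => ((Real.exp (q.2 / R) : ℝ) : ℂ)
          * wzbar (wz (fun r => ((φ r σ : ℝ) : ℂ))) q)) p = 0)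
    ∧ (∃ (p : ℝ × ℝ) (σ : Fin 3),
        wzbar (wz (fun r => ((φ r σ : ℝ) : ℂ))) p ≠ 0) := by
  obtain rfl : φ = cylinder R := funext hφ
  refine ⟨fun p => ?_, fun p σ => ?_, ⟨(0, 0), 0, ?_⟩⟩
  · simp [Fin.sum_univ_three, pdx_cylinder hR.ne', pdy_cylinder, ← Real.exp_add]
  · obtain rfl | rfl | rfl : σ = 0 ∨ σ = 1 ∨ σ = 2 := by fin_cases σ <;> simp
    · rw [ofReal_cylinder_zero, wzbar_wz_ofReal_exp_mul_wzbar_wz_expTrig_zero, Pi.zero_apply]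
    · rw [ofReal_cylinder_one, wzbar_wz_ofReal_exp_mul_wzbar_wz_expTrig_zero, Pi.zero_apply]
    · rw [ofReal_cylinder_two, wzbar_wz_ofReal_snd]
      simp only [Pi.zero_apply, mul_zero, wz_const, wzbar_const]
  · rw [ofReal_cylinder_zero, wzbar_wz_expTrig]
    simp [expTrig, hR.ne']
end

section
/- The map φ: ℝ² → ℝ⁶, φ(x,y) = (R cos(x/R), R sin(x/R), y, R cos(x/R), R sin(x/R), y), satisfies: (a) |φ_x|² = |φ_y|² = 2 and ⟨φ_x, φ_y⟩ = 0 (so φ is conformal with respect to g = e^{y/R}(dx² + dy²) with conformal factor λ² = 2e^{−y/R}); and (b) each component of λ⁻²·∂φ_z/∂z̄ (with φ_z = (φ_x − iφ_y)/2, z = x + iy) is annihilated by ∂²/(∂z̄∂z), while ∂φ_z/∂z̄ ≠ 0. -/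
/-!
Each component of `φ` is separable, `f = u(x) v(y)`, and `4 ∂²f/∂z̄∂z = u'' v + u v''`.
The components `y` are harmonic. The components `R cos(x/R)`, `R sin(x/R)` satisfy `u'' = -u/R²`,
so `λ⁻² ∂²φ/∂z̄∂z = e^{y/R} u''(x)/8` is again separable, with `x`-factor an eigenfunction of
`d²/dx²` for `-1/R²` and `y`-factor an eigenfunction of `d²/dy²` for `1/R²`: the two terms of its
Laplacian cancel.
-/

open Complex

section Separable

variable {u u' u'' v v' v'' : ℝ → ℝ}

theorem wz_eq_of_hasDerivAt {f : ℝ × ℝ → ℂ} {p : ℝ × ℝ} {dx dy : ℂ}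
    (hx : HasDerivAt (fun t => f (t, p.2)) dx p.1) (hy : HasDerivAt (fun t => f (p.1, t)) dy p.2) :
    wz f p = (dx - I * dy) / 2 := by
  rw [wz, pdx, pdy, hx.deriv, hy.deriv]

theorem wzbar_eq_of_hasDerivAt {f : ℝ × ℝ → ℂ} {p : ℝ × ℝ} {dx dy : ℂ}
    (hx : HasDerivAt (fun t => f (t, p.2)) dx p.1) (hy : HasDerivAt (fun t => f (p.1, t)) dy p.2) :
    wzbar f p = (dx + I * dy) / 2 := by
  rw [wzbar, pdx, pdy, hx.deriv, hy.deriv]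

theorem wz_ofReal_mul (hu : ∀ x, HasDerivAt u (u' x) x) (hv : ∀ y, HasDerivAt v (v' y) y) :
    wz (fun q => ((u q.1 * v q.2 : ℝ) : ℂ)) =
      fun q => (((u' q.1 * v q.2 : ℝ) : ℂ) - I * ((u q.1 * v' q.2 : ℝ) : ℂ)) / 2 :=
  funext fun q => wz_eq_of_hasDerivAt ((hu q.1).mul_const (v q.2)).ofReal_comp
    ((hv q.2).const_mul (u q.1)).ofReal_comp

theorem wzbar_wz_ofReal_mul (hu : ∀ x, HasDerivAt u (u' x) x) (hu' : ∀ x, HasDerivAt u' (u'' x) x)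
    (hv : ∀ y, HasDerivAt v (v' y) y) (hv' : ∀ y, HasDerivAt v' (v'' y) y) :
    wzbar (wz (fun q => ((u q.1 * v q.2 : ℝ) : ℂ))) =
      fun q => (((u'' q.1 * v q.2 + u q.1 * v'' q.2) / 4 : ℝ) : ℂ) := by
  rw [wz_ofReal_mul hu hv]
  funext q
  rw [wzbar_eq_of_hasDerivAt
    ((((hu' q.1).mul_const (v q.2)).ofReal_comp.sub
      (((hu q.1).mul_const (v' q.2)).ofReal_comp.const_mul I)).div_const 2)
    ((((hv q.2).const_mul (u' q.1)).ofReal_comp.sub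
      (((hv' q.2).const_mul (u q.1)).ofReal_comp.const_mul I)).div_const 2)]
  push_cast
  linear_combination (-(u q.1 : ℂ) * v'' q.2 / 4) * I_sq

theorem wzbar_wz_ofReal_fst (hu : ∀ x, HasDerivAt u (u' x) x)
    (hu' : ∀ x, HasDerivAt u' (u'' x) x) :
    wzbar (wz (fun q => ((u q.1 : ℝ) : ℂ))) = fun q => ((u'' q.1 / 4 : ℝ) : ℂ) := by
  simpa using wzbar_wz_ofReal_mul (v := fun _ => 1) hu hu' (fun y => hasDerivAt_const y 1)
    (fun y => hasDerivAt_const y 0)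

theorem wzbar_wz_ofReal_snd_s17 (hv : ∀ y, HasDerivAt v (v' y) y)
    (hv' : ∀ y, HasDerivAt v' (v'' y) y) :
    wzbar (wz (fun q => ((v q.2 : ℝ) : ℂ))) = fun q => ((v'' q.2 / 4 : ℝ) : ℂ) := by
  simpa using wzbar_wz_ofReal_mul (u := fun _ => 1) (fun x => hasDerivAt_const x 1)
    (fun x => hasDerivAt_const x 0) hv hv'

theorem wzbar_wz_ofReal_mul_eq_zero {k : ℝ} (hu : ∀ x, HasDerivAt u (u' x) x)
    (hu' : ∀ x, HasDerivAt u' (-(k * u x)) x) (hv : ∀ y, HasDerivAt v (v' y) y)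
    (hv' : ∀ y, HasDerivAt v' (k * v y) y) :
    wzbar (wz (fun q => ((u q.1 * v q.2 : ℝ) : ℂ))) = 0 := by
  rw [wzbar_wz_ofReal_mul hu hu' hv hv']
  funext q
  simp only [Pi.zero_apply, ofReal_eq_zero]
  ring

end Separable

theorem hasDerivAt_exp_div_two_div (R y : ℝ) :
    HasDerivAt (fun t => Real.exp (t / R) / 2) (Real.exp (y / R) / 2 / R) y :=
  ((((hasDerivAt_id' y).div_const R).exp).div_const 2).congr_deriv (by ring)

theorem wzbar_wz_exp_mul_wzbar_wz_ofReal_fst {R : ℝ} {u u' : ℝ → ℝ}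
    (hu : ∀ x, HasDerivAt u (u' x) x) (hu' : ∀ x, HasDerivAt u' (-(u x / R ^ 2)) x) :
    wzbar (wz fun q => ((Real.exp (q.2 / R) / 2 : ℝ) : ℂ) *
      wzbar (wz fun r => ((u r.1 : ℝ) : ℂ)) q) = 0 := by
  rw [wzbar_wz_ofReal_fst hu hu']
  have hexp' : ∀ y, HasDerivAt (fun t => Real.exp (t / R) / 2 / R)
      (1 / R ^ 2 * (Real.exp (y / R) / 2)) y := fun y =>
    ((hasDerivAt_exp_div_two_div R y).div_const R).congr_deriv (by ring)
  convert wzbar_wz_ofReal_mul_eq_zero (k := 1 / R ^ 2) (u := fun x => -(u x / R ^ 2) / 4)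
    (fun x => ((hu x).div_const (R ^ 2)).neg.div_const 4)
    (fun x => (((hu' x).div_const (R ^ 2)).neg.div_const 4).congr_deriv (by ring))
    (hasDerivAt_exp_div_two_div R) hexp' using 3
  funext q
  rw [← ofReal_mul, mul_comm]

theorem hasDerivAt_cos_div (R x : ℝ) :
    HasDerivAt (fun t => Real.cos (t / R)) (-Real.sin (x / R) / R) x :=
  (((hasDerivAt_id' x).div_const R).cos).congr_deriv (by ring)

theorem hasDerivAt_sin_div (R x : ℝ) :
    HasDerivAt (fun t => Real.sin (t / R)) (Real.cos (x / R) / R) x :=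
  (((hasDerivAt_id' x).div_const R).sin).congr_deriv (by ring)

/-- φ(x,y) = (R cos(x/R), R sin(x/R), y, R cos(x/R), R sin(x/R), y) into ℝ⁶
satisfies (a) |φ_x|² = |φ_y|² = 2 and ⟨φ_x,φ_y⟩ = 0 (conformal for g = e^{y/R}(dx²+dy²)
with λ² = 2e^{−y/R}), and (b) each component of λ⁻²·∂φ_z/∂z̄ is annihilated by ∂²/(∂z̄∂z)
while ∂φ_z/∂z̄ ≠ 0. -/
theorem stmt_17 (R : ℝ) (hR : 0 < R) (φ : ℝ × ℝ → Fin 6 → ℝ)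
    (hφ : ∀ p : ℝ × ℝ,
      φ p = ![R * Real.cos (p.1 / R), R * Real.sin (p.1 / R), p.2,
              R * Real.cos (p.1 / R), R * Real.sin (p.1 / R), p.2]) :
    (∀ p : ℝ × ℝ,
        (∑ σ, (pdx (fun q => φ q σ) p) ^ 2) = 2
        ∧ (∑ σ, (pdy (fun q => φ q σ) p) ^ 2) = 2
        ∧ (∑ σ, pdx (fun q => φ q σ) p * pdy (fun q => φ q σ) p) = 0)
    ∧ (∀ (p : ℝ × ℝ) (σ : Fin 6),
        wzbar (wz (fun q => ((Real.exp (q.2 / R) / 2 : ℝ) : ℂ)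
          * wzbar (wz (fun r => ((φ r σ : ℝ) : ℂ))) q)) p = 0)
    ∧ (∃ (p : ℝ × ℝ) (σ : Fin 6),
        wzbar (wz (fun r => ((φ r σ : ℝ) : ℂ))) p ≠ 0) := by
  have hR0 : R ≠ 0 := hR.ne'
  have hc : ∀ x, HasDerivAt (fun t => R * Real.cos (t / R)) (-Real.sin (x / R)) x := fun x =>
    ((hasDerivAt_cos_div R x).const_mul R).congr_deriv (by field_simp)
  have hs : ∀ x, HasDerivAt (fun t => R * Real.sin (t / R)) (Real.cos (x / R)) x := fun x =>
    ((hasDerivAt_sin_div R x).const_mul R).congr_deriv (by field_simp)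
  have hc' : ∀ x, HasDerivAt (fun t => -Real.sin (t / R)) (-(R * Real.cos (x / R) / R ^ 2)) x :=
    fun x => (hasDerivAt_sin_div R x).neg.congr_deriv (by field_simp)
  have hs' : ∀ x, HasDerivAt (fun t => Real.cos (t / R)) (-(R * Real.sin (x / R) / R ^ 2)) x :=
    fun x => (hasDerivAt_cos_div R x).congr_deriv (by field_simp)
  obtain rfl : φ = _ := funext hφ
  refine ⟨fun p => ?_, fun p σ => ?_, ⟨(0, 0), 0, ?_⟩⟩
  · simp [Fin.sum_univ_six, pdx, pdy, (hc _).deriv, (hs _).deriv, add_assoc, one_add_one_eq_two]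
  · have hy : wzbar (wz fun r => ((r.2 : ℝ) : ℂ)) = fun _ => 0 := by
      simpa using wzbar_wz_ofReal_snd_s17 hasDerivAt_id' (fun y => hasDerivAt_const y 1)
    have hcos := wzbar_wz_exp_mul_wzbar_wz_ofReal_fst hc hc'
    have hsin := wzbar_wz_exp_mul_wzbar_wz_ofReal_fst hs hs'
    beta_reduce at hcos hsin
    fin_cases σ <;> simp only [Fin.reduceFinMk, Matrix.cons_val, hcos, hsin, hy]
    all_goals simp [wzbar, wz, pdx, pdy]
  · simp only [Matrix.cons_val, wzbar_wz_ofReal_fst hc hc']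
    simp [hR0]
end
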